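/- Let Φ ∈ C¹(ℝᴷ) with L-Lipschitz gradient satisfy (x − θ*)·∇Φ(x)/2 ≥ λ(Φ(x) − Φ(θ*) + ‖x − θ*‖²/4) for λ ∈ (0, 1/4], where θ* is its minimiser. Let 0 < m ≤ 1 and let (q_t, p_t) solve q' = p, m p' = −∇Φ(q) − p. Then ‖q_t − θ*‖² ≤ 16(L+2) e^{−λt} (‖q₀ − θ*‖² + m²‖p₀‖²) for all t ≥ 0. -/

import Mathlib

open RealInnerProductSpace

/-! A Lyapunov argument. With `x = q - θ*`, the energy
`V = 2m (Φ q - Φ θ*) + ‖x + m p‖² / 2 + m² ‖p‖² / 2 - λ m ‖x‖² / 2`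
satisfies `V' = -(⟪x, ∇Φ q⟫ + m ‖p‖² + λ m ⟪x, p⟫)`, because `(x + m p)' = -∇Φ q`.
The coercivity assumption and `λ m ≤ 1/4` turn this into `V' ≤ -λ V`, and also give
`‖x‖² / 8 ≤ V`, with no dependence on `m`. The descent lemma `Φ q - Φ θ* ≤ L/2 ‖x‖²`
bounds `V(0)` by `(L + 1) ‖x₀‖² + 3/2 m² ‖p₀‖²`, and Grönwall concludes. -/

section Gradient

variable {E : Type*} [NormedAddCommGroup E] [InnerProductSpace ℝ E] [CompleteSpace E]

theorem HasGradientAt.hasDerivAt_comp {Φ : E → ℝ} {g v : E} {f : ℝ → E} {t : ℝ}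
    (hΦ : HasGradientAt Φ g (f t)) (hf : HasDerivAt f v t) :
    HasDerivAt (fun s => Φ (f s)) ⟪g, v⟫ t := by
  simpa [Function.comp_def] using (hasGradientAt_iff_hasFDerivAt.mp hΦ).comp_hasDerivAt t hf

theorem IsLocalMin.gradient_eq_zero {Φ : E → ℝ} {θ : E} (h : IsLocalMin Φ θ) :
    gradient Φ θ = 0 := by
  simp [gradient, h.fderiv_eq_zero]

theorem sub_sub_inner_gradient_le {Φ : E → ℝ} {L : ℝ} (hΦ : Differentiable ℝ Φ)
    (hLip : ∀ x y, ‖gradient Φ x - gradient Φ y‖ ≤ L * ‖x - y‖) (x y : E) :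
    Φ x - Φ y - ⟪gradient Φ y, x - y⟫ ≤ L / 2 * ‖x - y‖ ^ 2 := by
  set v := x - y
  let g : ℝ → ℝ := fun s => Φ (y + s • v) - s * ⟪gradient Φ y, v⟫ - L / 2 * s ^ 2 * ‖v‖ ^ 2
  have hg : ∀ s, HasDerivAt g
      (⟪gradient Φ (y + s • v) - gradient Φ y, v⟫ - L * s * ‖v‖ ^ 2) s := by
    intro s
    have hline : HasDerivAt (fun r : ℝ => y + r • v) v s := by
      simpa using ((hasDerivAt_id s).smul_const v).const_add y
    have := (((hΦ _).hasGradientAt.hasDerivAt_comp hline).sub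
      ((hasDerivAt_id s).mul_const ⟪gradient Φ y, v⟫)).sub
      (((hasDerivAt_pow 2 s).const_mul (L / 2)).mul_const (‖v‖ ^ 2))
    refine this.congr_deriv ?_
    simp only [inner_sub_left, Nat.reduceSub, pow_one, Nat.cast_ofNat]
    ring
  have hg_nonpos : ∀ s ∈ interior (Set.Ici (0 : ℝ)),
      ⟪gradient Φ (y + s • v) - gradient Φ y, v⟫ - L * s * ‖v‖ ^ 2 ≤ 0 := by
    intro s hs
    rw [interior_Ici, Set.mem_Ioi] at hs
    have hgrad : ‖gradient Φ (y + s • v) - gradient Φ y‖ ≤ L * (s * ‖v‖) := by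
      simpa [norm_smul, abs_of_pos hs] using hLip (y + s • v) y
    have := (real_inner_le_norm _ v).trans (mul_le_mul_of_nonneg_right hgrad (norm_nonneg v))
    linarith
  have hanti := antitoneOn_of_hasDerivWithinAt_nonpos (convex_Ici 0)
    (fun s _ => (hg s).continuousAt.continuousWithinAt)
    (fun s _ => (hg s).hasDerivWithinAt) hg_nonpos
  have h10 : g 1 ≤ g 0 := hanti Set.self_mem_Ici (Set.mem_Ici.mpr zero_le_one) zero_le_one
  simp only [g, v, one_smul, zero_smul, add_sub_cancel, add_zero, one_mul, one_pow, mul_one,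
    zero_mul, sub_zero, ne_eq, OfNat.ofNat_ne_zero, not_false_eq_true, zero_pow, mul_zero] at h10
  linarith

end Gradient

theorem nonneg_of_forall_norm_sub_le_mul {E F : Type*} [NormedAddCommGroup E]
    [Nontrivial E] [SeminormedAddCommGroup F] {f : E → F} {L : ℝ}
    (h : ∀ x y, ‖f x - f y‖ ≤ L * ‖x - y‖) : 0 ≤ L := by
  obtain ⟨x, hx⟩ := exists_ne (0 : E)
  exact nonneg_of_mul_nonneg_left ((norm_nonneg _).trans (h x 0)) (by rwa [sub_zero, norm_pos_iff])

theorem le_mul_exp_of_hasDerivAt_le_mul {f f' : ℝ → ℝ} {K : ℝ}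
    (hf : ∀ t, HasDerivAt f (f' t) t) (bound : ∀ t, f' t ≤ K * f t) {t : ℝ} (ht : 0 ≤ t) :
    f t ≤ f 0 * Real.exp (K * t) := by
  have := le_gronwallBound_of_liminf_deriv_right_le (a := 0) (b := t) (ε := 0)
    (fun s _ => (hf s).continuousAt.continuousWithinAt)
    (fun s _ _ hr => (hf s).hasDerivWithinAt.liminf_right_slope_le hr) le_rfl
    (fun s _ => by simpa using bound s) t ⟨ht, le_rfl⟩
  simpa [gronwallBound_ε0] using this

section Lyapunov

variable {E : Type*} [NormedAddCommGroup E] [InnerProductSpace ℝ E]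

noncomputable def underdampedLyapunov (Φ : E → ℝ) (θ : E) (m lam : ℝ) (q p : E) : ℝ :=
  2 * m * (Φ q - Φ θ) + ‖q - θ + m • p‖ ^ 2 / 2 + m ^ 2 * ‖p‖ ^ 2 / 2
    - lam * m * ‖q - θ‖ ^ 2 / 2

variable {Φ : E → ℝ} {θ : E} {m lam : ℝ}

theorem hasDerivAt_underdampedLyapunov [CompleteSpace E] (hΦ : Differentiable ℝ Φ) (hm : m ≠ 0)
    {q p : ℝ → E} {t : ℝ} (hq : HasDerivAt q (p t) t)
    (hp : HasDerivAt p (m⁻¹ • (-gradient Φ (q t) - p t)) t) :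
    HasDerivAt (fun s => underdampedLyapunov Φ θ m lam (q s) (p s))
      (-(⟪q t - θ, gradient Φ (q t)⟫ + m * ‖p t‖ ^ 2 + lam * m * ⟪q t - θ, p t⟫)) t := by
  have hx : HasDerivAt (fun s => q s - θ) (p t) t := hq.sub_const θ
  have hz : HasDerivAt (fun s => q s - θ + m • p s) (-gradient Φ (q t)) t := by
    refine (hx.add (hp.const_smul m)).congr_deriv ?_
    rw [smul_smul, mul_inv_cancel₀ hm, one_smul]
    abel
  have := (((((hΦ _).hasGradientAt.hasDerivAt_comp hq).sub_const (Φ θ)).const_mul (2 * m)).add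
    (hz.norm_sq.div_const 2)).add ((hp.norm_sq.const_mul (m ^ 2)).div_const 2) |>.sub
    ((hx.norm_sq.const_mul (lam * m)).div_const 2)
  refine this.congr_deriv ?_
  simp only [inner_add_left, inner_neg_right, inner_smul_right, inner_smul_left, inner_sub_right,
    real_inner_self_eq_norm_sq, real_inner_comm (p t) (gradient Φ (q t)), conj_trivial]
  field_simp
  ring

theorem underdampedLyapunov_dissipation {q p g : E} (hmin : Φ θ ≤ Φ q)
    (hass : lam * (Φ q - Φ θ + ‖q - θ‖ ^ 2 / 4) ≤ ⟪q - θ, g⟫ / 2)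
    (hm : 0 ≤ m) (hm1 : m ≤ 1) (hlam : 0 ≤ lam) (hlam4 : lam ≤ 1 / 4) :
    -(⟪q - θ, g⟫ + m * ‖p‖ ^ 2 + lam * m * ⟪q - θ, p⟫)
      ≤ -lam * underdampedLyapunov Φ θ m lam q p := by
  have hsq : ‖q - θ + m • p‖ ^ 2 = ‖q - θ‖ ^ 2 + 2 * m * ⟪q - θ, p⟫ + m ^ 2 * ‖p‖ ^ 2 := by
    rw [norm_add_sq_real, norm_smul, real_inner_smul_right, Real.norm_eq_abs, mul_pow, sq_abs]
    ring
  have hgap : 0 ≤ m * (1 - lam * m) * ‖p‖ ^ 2 :=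
    mul_nonneg (mul_nonneg hm (by nlinarith)) (sq_nonneg _)
  unfold underdampedLyapunov
  rw [hsq]
  nlinarith [mul_nonneg (sub_nonneg.mpr hm1) (mul_nonneg hlam (sub_nonneg.mpr hmin)),
    mul_nonneg (mul_nonneg (sq_nonneg lam) hm) (sq_nonneg ‖q - θ‖)]

theorem sq_norm_sub_div_eight_le_underdampedLyapunov {q p : E} (hmin : Φ θ ≤ Φ q)
    (hm : 0 ≤ m) (hlm : lam * m ≤ 1 / 4) :
    ‖q - θ‖ ^ 2 / 8 ≤ underdampedLyapunov Φ θ m lam q p := by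
  have hpar := parallelogram_law_with_norm ℝ (q - θ + m • p) (m • p)
  rw [add_sub_cancel_right, norm_smul, Real.norm_eq_abs, mul_pow, sq_abs] at hpar
  unfold underdampedLyapunov
  nlinarith [mul_nonneg hm (sub_nonneg.mpr hmin), sq_nonneg ‖q - θ + m • p + m • p‖,
    mul_le_mul_of_nonneg_right hlm (sq_nonneg ‖q - θ‖)]

theorem underdampedLyapunov_le {L : ℝ} {q p : E} (hmin : Φ θ ≤ Φ q)
    (hdescent : Φ q - Φ θ ≤ L / 2 * ‖q - θ‖ ^ 2)
    (hm : 0 ≤ m) (hm1 : m ≤ 1) (hlam : 0 ≤ lam) :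
    underdampedLyapunov Φ θ m lam q p ≤ (L + 1) * ‖q - θ‖ ^ 2 + 3 / 2 * m ^ 2 * ‖p‖ ^ 2 := by
  have hpar := parallelogram_law_with_norm ℝ (q - θ) (m • p)
  rw [norm_smul, Real.norm_eq_abs, mul_pow, sq_abs] at hpar
  unfold underdampedLyapunov
  nlinarith [mul_nonneg (sub_nonneg.mpr hm1) (sub_nonneg.mpr hmin), sq_nonneg ‖q - θ - m • p‖,
    mul_nonneg (mul_nonneg hlam hm) (sq_nonneg ‖q - θ‖)]

end Lyapunov

/-- Exponential convergence of the position of the fixed-sample underdamped flow with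
small mass `m`, at rate independent of `m`. -/
theorem stmt8 {K : ℕ} (Φ : EuclideanSpace ℝ (Fin K) → ℝ) (L lam m : ℝ)
    (hC1 : ContDiff ℝ 1 Φ)
    (hLip : ∀ x y : EuclideanSpace ℝ (Fin K),
      ‖gradient Φ x - gradient Φ y‖ ≤ L * ‖x - y‖)
    (hlam : lam ∈ Set.Ioc (0 : ℝ) (1 / 4))
    (θs : EuclideanSpace ℝ (Fin K)) (hmin : ∀ x, Φ θs ≤ Φ x)
    (hass : ∀ x, lam * (Φ x - Φ θs + ‖x - θs‖ ^ 2 / 4)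
      ≤ ⟪x - θs, gradient Φ x⟫ / 2)
    (hm : 0 < m) (hm1 : m ≤ 1)
    (q p : ℝ → EuclideanSpace ℝ (Fin K))
    (hq : ∀ t, HasDerivAt q (p t) t)
    (hp : ∀ t, HasDerivAt p (m⁻¹ • (-(gradient Φ (q t)) - p t)) t) :
    ∀ t ≥ (0 : ℝ), ‖q t - θs‖ ^ 2
      ≤ 16 * (L + 2) * Real.exp (-(lam * t)) * (‖q 0 - θs‖ ^ 2 + m ^ 2 * ‖p 0‖ ^ 2) := by
  intro t ht
  obtain ⟨hlam0, hlam4⟩ := hlam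
  -- for `K = 0` nothing forces `0 ≤ L`, but both sides vanish
  rcases subsingleton_or_nontrivial (EuclideanSpace ℝ (Fin K)) with hE | hE
  · simp [Subsingleton.elim (q t) θs, Subsingleton.elim (q 0) θs, Subsingleton.elim (p 0) 0]
  have hΦ : Differentiable ℝ Φ := hC1.differentiable one_ne_zero
  have hL : 0 ≤ L := nonneg_of_forall_norm_sub_le_mul hLip
  have hgrad : gradient Φ θs = 0 :=
    IsLocalMin.gradient_eq_zero (Filter.Eventually.of_forall hmin)
  set V := fun s => underdampedLyapunov Φ θs m lam (q s) (p s)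
  have hdecay : V t ≤ V 0 * Real.exp (-lam * t) :=
    le_mul_exp_of_hasDerivAt_le_mul
      (fun s => hasDerivAt_underdampedLyapunov hΦ hm.ne' (hq s) (hp s))
      (fun s => underdampedLyapunov_dissipation (hmin _) (hass _) hm.le hm1 hlam0.le hlam4) ht
  have hVt : ‖q t - θs‖ ^ 2 / 8 ≤ V t :=
    sq_norm_sub_div_eight_le_underdampedLyapunov (hmin _) hm.le (by nlinarith)
  have hV0 : V 0 ≤ (L + 1) * ‖q 0 - θs‖ ^ 2 + 3 / 2 * m ^ 2 * ‖p 0‖ ^ 2 :=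
    underdampedLyapunov_le (hmin _)
      (by simpa [hgrad] using sub_sub_inner_gradient_le hΦ hLip (q 0) θs) hm.le hm1 hlam0.le
  have hslack : 0 ≤ Real.exp (-(lam * t)) *
      ((8 * L + 24) * ‖q 0 - θs‖ ^ 2 + (16 * L + 20) * m ^ 2 * ‖p 0‖ ^ 2) := by positivity
  rw [neg_mul] at hdecay
  calc ‖q t - θs‖ ^ 2 ≤ 8 * (V 0 * Real.exp (-(lam * t))) := by linarith
    _ ≤ 8 * (((L + 1) * ‖q 0 - θs‖ ^ 2 + 3 / 2 * m ^ 2 * ‖p 0‖ ^ 2) * Real.exp (-(lam * t))) := by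
      gcongr
    _ = 16 * (L + 2) * Real.exp (-(lam * t)) * (‖q 0 - θs‖ ^ 2 + m ^ 2 * ‖p 0‖ ^ 2)
        - Real.exp (-(lam * t)) *
          ((8 * L + 24) * ‖q 0 - θs‖ ^ 2 + (16 * L + 20) * m ^ 2 * ‖p 0‖ ^ 2) := by ring
    _ ≤ _ := sub_le_self _ hslack
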